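/- Let θ*, θtrue, e be real numbers, σ > 0, τ > 0, and z* ∈ [−1,1], satisfying θ* − θtrue + ((−|θ*| + √(|θ*|² + 4σ²))/2)·z* = e. If |θtrue| ≥ θmin > 0, |e| < θmin/2, and τ + σ < θmin/2, then |θ*| > τ. -/

import Mathlib

/-!
The shrinkage factor `(-a + √(a² + 4σ²)) / 2` lies in `[0, σ]`, so the stationarity equation
writes `θtrue + e` as `θ*` plus a perturbation of size at most `σ`. If `|θ*| ≤ τ`, then
`|θtrue + e| ≤ τ + σ < θmin / 2`, whereas `|θtrue + e| ≥ θmin - |e| > θmin / 2`.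
-/

open Real

lemma shrinkage_nonneg (a σ : ℝ) : 0 ≤ (-a + √(a ^ 2 + 4 * σ ^ 2)) / 2 := by
  have : a ≤ √(a ^ 2 + 4 * σ ^ 2) :=
    Real.le_sqrt_of_sq_le (by nlinarith [sq_nonneg σ])
  linarith

lemma shrinkage_le {a : ℝ} (ha : 0 ≤ a) {σ : ℝ} (hσ : 0 ≤ σ) :
    (-a + √(a ^ 2 + 4 * σ ^ 2)) / 2 ≤ σ := by
  have : √(a ^ 2 + 4 * σ ^ 2) ≤ a + 2 * σ :=
    Real.sqrt_le_iff.mpr ⟨by linarith, by nlinarith⟩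
  linarith

theorem stmt13_general (θs θt e σ τ θmin zs : ℝ) (hσ : 0 < σ)
    (hz : zs ∈ Set.Icc (-1 : ℝ) 1)
    (heq : θs - θt + ((-|θs| + Real.sqrt (|θs| ^ 2 + 4 * σ ^ 2)) / 2) * zs = e)
    (ht : |θt| ≥ θmin) (he : |e| < θmin / 2)
    (hts : τ + σ < θmin / 2) :
    |θs| > τ := by
  set s := (-|θs| + √(|θs| ^ 2 + 4 * σ ^ 2)) / 2
  have hs_nonneg : 0 ≤ s := shrinkage_nonneg _ _
  have hs_le : s ≤ σ := shrinkage_le (abs_nonneg θs) hσ.le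
  have hsz : |s * zs| ≤ s := by
    rw [abs_mul, abs_of_nonneg hs_nonneg]
    exact mul_le_of_le_one_right hs_nonneg (abs_le.mpr hz)
  have hθt : θt + e = θs + s * zs := by linarith
  have lower : θmin / 2 < |θt + e| := by
    have := abs_add_le (θt + e) (-e)
    rw [add_neg_cancel_right, abs_neg] at this
    linarith
  have upper : |θt + e| ≤ |θs| + s := by
    rw [hθt]; linarith [abs_add_le θs (s * zs)]
  by_contra! hle
  linarith

/-- Support recovery: under the stationarity equation with shrinkage term,
if `|θtrue| ≥ θmin`, the noise is small (`|e| < θmin/2`), and `τ + σ < θmin/2`,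
then `|θ*| > τ`. -/
theorem stmt13 (θs θt e σ τ θmin zs : ℝ) (hσ : 0 < σ) (hτ : 0 < τ)
    (hz : zs ∈ Set.Icc (-1 : ℝ) 1)
    (heq : θs - θt + ((-|θs| + Real.sqrt (|θs| ^ 2 + 4 * σ ^ 2)) / 2) * zs = e)
    (hθmin : 0 < θmin) (ht : |θt| ≥ θmin) (he : |e| < θmin / 2)
    (hts : τ + σ < θmin / 2) :
    |θs| > τ :=
  stmt13_general θs θt e σ τ θmin zs hσ hz heq ht he hts
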